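/- Let X \subset P^1 \times P^1 be a zero-dimensional scheme whose Hilbert matrix M_X has first difference supported in the rectangle [0,a] \times [0,b], and let P = R_h \cap C_k be a point of X of multiplicity 1, where R_h is a (1,0)-line and C_k a (0,1)-line. Let Z = X \ {P}, p = #(Z \cap R_h), q = #(Z \cap C_k). If there exists a separator for P in X of bidegree (q,p), then \Delta M_Z(i,j) = \Delta M_X(i,j) for all (i,j) \ne (q,p), and \Delta M_Z(q,p) = \Delta M_X(q,p) - 1. -/

import Mathlib

open MvPolynomial

noncomputable section

open scoped Classical

/-- The bigraded coordinate ring of `ℙ¹ × ℙ¹`: polynomials in the variables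
`x₀, x₁` (the left `Fin 2`) and `y₀, y₁` (the right `Fin 2`). -/
abbrev BiPoly (k : Type) [Field k] := MvPolynomial (Fin 2 ⊕ Fin 2) k

/-- A point of the quadric `Q = ℙ¹ × ℙ¹`. -/
abbrev Pt (k : Type) [Field k] := Projectivization k (Fin 2 → k) × Projectivization k (Fin 2 → k)

variable (k : Type) [Field k]

/-- `f` is bihomogeneous of bidegree `(i,j)`: each monomial has degree `i` in
the `x`-variables and degree `j` in the `y`-variables. -/
def IsBihomog (i j : ℕ) (f : BiPoly k) : Prop :=
  ∀ d ∈ f.support, d (Sum.inl 0) + d (Sum.inl 1) = i ∧ d (Sum.inr 0) + d (Sum.inr 1) = j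

/-- `f` vanishes at a point of `ℙ¹ × ℙ¹` (tested on all representatives). -/
def VanishesAt (f : BiPoly k) (P : Pt k) : Prop :=
  ∀ (u v : Fin 2 → k) (hu : u ≠ 0) (hv : v ≠ 0),
    Projectivization.mk k u hu = P.1 → Projectivization.mk k v hv = P.2 →
    eval (Sum.elim u v) f = 0

/-- The bidegree-`(i,j)` piece of the (saturated) ideal of a reduced
zero-dimensional scheme `X ⊆ ℙ¹ × ℙ¹`: the `k`-vector space of bihomogeneous
forms of bidegree `(i,j)` vanishing on `X`.  Its dimension is
`h⁰(I_X(i,j)) = dim I(X)_{(i,j)}`. -/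
def idealPiece (X : Finset (Pt k)) (i j : ℕ) : Submodule k (BiPoly k) where
  carrier := {f | IsBihomog k i j f ∧ ∀ P ∈ X, VanishesAt k f P}
  zero_mem' := by
    refine ⟨?_, ?_⟩
    · intro d hd; simp at hd
    · intro P _ u v hu hv h1 h2; simp
  add_mem' := by
    rintro f g ⟨hf1, hf2⟩ ⟨hg1, hg2⟩
    refine ⟨?_, ?_⟩
    · intro d hd
      rcases Finset.mem_union.mp (MvPolynomial.support_add hd) with h | h
      exacts [hf1 d h, hg1 d h]
    · intro P hP u v hu hv h1 h2
      simp [hf2 P hP u v hu hv h1 h2, hg2 P hP u v hu hv h1 h2]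
  smul_mem' := by
    rintro c f ⟨hf1, hf2⟩
    refine ⟨?_, ?_⟩
    · intro d hd
      exact hf1 d (MvPolynomial.support_smul hd)
    · intro P hP u v hu hv h1 h2
      rw [smul_eq_C_mul, map_mul, hf2 P hP u v hu hv h1 h2, mul_zero]

/-- The bigraded Hilbert function of a reduced zero-dimensional scheme
`X ⊆ ℙ¹ × ℙ¹`, as a matrix indexed by `ℤ × ℤ`:
`M_X(i,j) = (i+1)(j+1) - dim I(X)_{(i,j)}` for `i, j ≥ 0`, and `0` otherwise. -/
def hilbMat (X : Finset (Pt k)) (i j : ℤ) : ℤ :=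
  if 0 ≤ i ∧ 0 ≤ j then
    (i + 1) * (j + 1) - (Module.finrank k (idealPiece k X i.toNat j.toNat) : ℤ)
  else 0

/-- The first difference of a matrix indexed by `ℤ × ℤ`. -/
def diffMat (M : ℤ → ℤ → ℤ) (i j : ℤ) : ℤ :=
  M i j - M (i - 1) j - M i (j - 1) + M (i - 1) (j - 1)

/-- A separator of bidegree `(q,p)` for a (multiplicity one) point `P` of the
reduced zero-dimensional scheme `X`: a bihomogeneous form of bidegree `(q,p)`
not vanishing at `P` but vanishing at all other points of `X`. -/
def IsSeparator (X : Finset (Pt k)) (P : Pt k) (q p : ℕ) (f : BiPoly k) : Prop :=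
  IsBihomog k q p f ∧ ¬ VanishesAt k f P ∧ ∀ P' ∈ X.erase P, VanishesAt k f P'

/-!
Deleting `P` from `X` raises `dim I(X)_{(i,j)}` by one exactly when `P` has a separator of
bidegree `(i,j)`. Multiplying the given separator of bidegree `(q,p)` by monomials gives one in
every bidegree `≥ (q,p)`. Conversely, a separator `f` of bidegree `(i,j)` vanishes at the `p`
other points of `X` on the row `R_h ≅ ℙ¹`; in an affine chart of `R_h` missing `P` it becomes a
polynomial of degree `≤ j` whose `j`-th coefficient is `f(P) ≠ 0`, so `p ≤ j`, and symmetrically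
`q ≤ i`. Hence `M_X - M_Z` is the indicator of the quadrant `[q,∞) × [p,∞)`, whose first
difference is the indicator of `(q,p)`.
-/

namespace Polynomial

variable {R σ : Type*} [CommSemiring R]

theorem natDegree_prod_pow_le {ps : σ → R[X]} {w : σ → ℕ} (hps : ∀ i, (ps i).natDegree ≤ w i)
    (d : σ → ℕ) (s : Finset σ) :
    (∏ i ∈ s, ps i ^ d i).natDegree ≤ ∑ i ∈ s, d i * w i :=
  (natDegree_prod_le s _).trans <| Finset.sum_le_sum fun i _ => natDegree_pow_le_of_le _ (hps i)

theorem coeff_prod_pow_of_natDegree_le {ps : σ → R[X]} {w : σ → ℕ}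
    (hps : ∀ i, (ps i).natDegree ≤ w i) (d : σ → ℕ) (s : Finset σ) :
    (∏ i ∈ s, ps i ^ d i).coeff (∑ i ∈ s, d i * w i) = ∏ i ∈ s, (ps i).coeff (w i) ^ d i := by
  classical
  induction s using Finset.induction_on with
  | empty => simp
  | insert a s ha ih =>
    rw [Finset.prod_insert ha, Finset.sum_insert ha, Finset.prod_insert ha,
      coeff_mul_add_eq_of_natDegree_le (natDegree_pow_le_of_le _ (hps a))
        (natDegree_prod_pow_le hps d s), ih, coeff_pow_of_natDegree_le (hps a)]

end Polynomial

namespace MvPolynomial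

variable {R σ : Type*} [CommSemiring R] {w : σ → ℕ} {n : ℕ} {f : MvPolynomial σ R}
  {ps : σ → Polynomial R}

theorem IsWeightedHomogeneous.natDegree_aeval_le (hf : IsWeightedHomogeneous w f n)
    (hps : ∀ i, (ps i).natDegree ≤ w i) : (aeval ps f).natDegree ≤ n := by
  rw [aeval_def, eval₂_eq]
  refine Polynomial.natDegree_sum_le_of_forall_le _ _ fun d hd => ?_
  rw [Polynomial.algebraMap_eq, ← hf (mem_support_iff.mp hd)]
  exact (Polynomial.natDegree_C_mul_le _ _).trans (Polynomial.natDegree_prod_pow_le hps d d.support)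

theorem IsWeightedHomogeneous.coeff_aeval (hf : IsWeightedHomogeneous w f n)
    (hps : ∀ i, (ps i).natDegree ≤ w i) :
    (aeval ps f).coeff n = eval (fun i => (ps i).coeff (w i)) f := by
  rw [aeval_def, eval₂_eq, eval_eq, Polynomial.finsetSum_coeff]
  refine Finset.sum_congr rfl fun d hd => ?_
  rw [Polynomial.algebraMap_eq, Polynomial.coeff_C_mul, ← hf (mem_support_iff.mp hd)]
  exact congrArg _ (Polynomial.coeff_prod_pow_of_natDegree_le hps d d.support)

theorem polynomial_eval_aeval (ps : σ → Polynomial R) (f : MvPolynomial σ R) (c : R) :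
    (aeval ps f).eval c = eval (fun i => (ps i).eval c) f := by
  rw [← Polynomial.coe_aeval_eq_eval, comp_aeval_apply]
  rfl

end MvPolynomial

namespace Projectivization

open Module
open scoped LinearAlgebra.Projectivization

variable {K V : Type*} [Field K] [AddCommGroup V] [Module K V] {v e : V}

theorem smul_add_ne_zero (hve : LinearIndependent K ![v, e]) (c : K) : c • v + e ≠ 0 := fun h =>
  one_ne_zero ((LinearIndependent.pair_iff.1 hve c 1 (by rwa [one_smul])).2)

variable (K) in
def lineChart (hve : LinearIndependent K ![v, e]) (c : K) : ℙ K V :=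
  mk K (c • v + e) (smul_add_ne_zero hve c)

theorem exists_lineChart_eq (hve : LinearIndependent K ![v, e]) (hV : finrank K V = 2)
    (hv : v ≠ 0) (x : ℙ K V) (hx : x ≠ mk K v hv) : ∃ c, lineChart K hve c = x := by
  have hspan := hve.span_eq_top_of_card_eq_finrank (by simp [hV])
  obtain ⟨α, β, hw⟩ := Submodule.mem_span_pair.1 (by
    rw [← Matrix.range_cons_cons_empty, hspan]; exact Submodule.mem_top (x := x.rep))
  have hβ : β ≠ 0 := by
    rintro rfl
    refine hx ?_
    rw [← x.mk_rep, mk_eq_mk_iff']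
    exact ⟨α, by simpa using hw⟩
  refine ⟨α / β, ?_⟩
  rw [lineChart, ← x.mk_rep, mk_eq_mk_iff']
  refine ⟨β⁻¹, ?_⟩
  rw [← hw, smul_add, smul_smul, smul_smul, inv_mul_cancel₀ hβ, one_smul, inv_mul_eq_div]

theorem card_le_natDegree_of_lineChart_isRoot (hve : LinearIndependent K ![v, e])
    (hV : finrank K V = 2) (hv : v ≠ 0) {G : Polynomial K} (hG : G ≠ 0) {T : Finset (ℙ K V)}
    (hvT : mk K v hv ∉ T) (hroot : ∀ c, lineChart K hve c ∈ T → G.IsRoot c) :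
    T.card ≤ G.natDegree := by
  classical
  have hT : T ⊆ G.roots.toFinset.image (lineChart K hve) := by
    intro x hx
    obtain ⟨c, rfl⟩ := exists_lineChart_eq hve hV hv x (fun h => hvT (h ▸ hx))
    exact Finset.mem_image_of_mem _
      (Multiset.mem_toFinset.2 ((Polynomial.mem_roots hG).2 (hroot c hx)))
  calc T.card ≤ G.roots.toFinset.card := (Finset.card_le_card hT).trans Finset.card_image_le
    _ ≤ Multiset.card G.roots := Multiset.toFinset_card_le _
    _ ≤ G.natDegree := Polynomial.card_roots' G

end Projectivization

theorem Submodule.finrank_inf_ker_add_one {K V : Type*} [Field K] [AddCommGroup V] [Module K V]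
    {W : Submodule K V} [FiniteDimensional K W] {φ : V →ₗ[K] K} {w : V} (hw : w ∈ W)
    (hφw : φ w ≠ 0) : Module.finrank K ↥(W ⊓ LinearMap.ker φ) + 1 = Module.finrank K W := by
  set ψ := φ.domRestrict W
  have hψ : LinearMap.range ψ = ⊤ := LinearMap.range_eq_top.2 fun c =>
    ⟨(c / φ w) • ⟨w, hw⟩, by simp [ψ, hφw]⟩
  have hker : Module.finrank K (LinearMap.ker ψ) = Module.finrank K ↥(W ⊓ LinearMap.ker φ) := by
    rw [LinearMap.ker_domRestrict, ← (Submodule.comapSubtypeEquivOfLe inf_le_left).finrank_eq,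
      Submodule.comap_inf, Submodule.comap_subtype_self, top_inf_eq]
  have := ψ.finrank_range_add_finrank_ker
  rw [hψ, finrank_top, Module.finrank_self, hker] at this
  omega

section BiPoly

open Projectivization

variable {k : Type} [Field k] {S : Finset (Pt k)} {P : Pt k} {i j : ℕ} {f : BiPoly k}

theorem weight_sumElim_one_zero (d : Fin 2 ⊕ Fin 2 →₀ ℕ) :
    Finsupp.weight (Sum.elim 1 0) d = d (Sum.inl 0) + d (Sum.inl 1) := by
  simp [Finsupp.weight_apply, Finsupp.sum_fintype, Fintype.sum_sum_type]

theorem weight_sumElim_zero_one (d : Fin 2 ⊕ Fin 2 →₀ ℕ) :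
    Finsupp.weight (Sum.elim 0 1) d = d (Sum.inr 0) + d (Sum.inr 1) := by
  simp [Finsupp.weight_apply, Finsupp.sum_fintype, Fintype.sum_sum_type]

theorem isBihomog_iff : IsBihomog k i j f ↔
    IsWeightedHomogeneous (Sum.elim 1 0) f i ∧ IsWeightedHomogeneous (Sum.elim 0 1) f j := by
  simp only [IsBihomog, IsWeightedHomogeneous, MvPolynomial.mem_support_iff,
    weight_sumElim_one_zero, weight_sumElim_zero_one]
  exact ⟨fun h => ⟨fun d hd => (h d hd).1, fun d hd => (h d hd).2⟩,
    fun h _ hd => ⟨h.1 hd, h.2 hd⟩⟩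

theorem IsBihomog.isHomogeneous (hf : IsBihomog k i j f) : f.IsHomogeneous (i + j) :=
  fun d hd => by
    obtain ⟨hx, hy⟩ := hf d (MvPolynomial.mem_support_iff.2 hd)
    simp [Finsupp.weight_apply, Finsupp.sum_fintype, Fintype.sum_sum_type, ← hx, ← hy]

instance (S : Finset (Pt k)) (i j : ℕ) : FiniteDimensional k (idealPiece k S i j) :=
  have : FiniteDimensional k (homogeneousSubmodule (Fin 2 ⊕ Fin 2) k (i + j)) :=
    Module.Finite.iff_fg.2 (homogeneousSubmodule_fg _ _ _)
  Submodule.finiteDimensional_of_le fun _ hf => (mem_homogeneousSubmodule _ _).2 hf.1.isHomogeneous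

theorem IsBihomog.eval_smul (hf : IsBihomog k i j f) (a b : k) (u v : Fin 2 → k) :
    eval (Sum.elim (a • u) (b • v)) f = a ^ i * b ^ j * eval (Sum.elim u v) f := by
  rw [eval_eq', eval_eq', Finset.mul_sum]
  refine Finset.sum_congr rfl fun d hd => ?_
  obtain ⟨hx, hy⟩ := hf d hd
  simp only [Fintype.prod_sum_type, Sum.elim_inl, Sum.elim_inr, Fin.prod_univ_two, Pi.smul_apply,
    smul_eq_mul, ← hx, ← hy]
  ring

theorem IsBihomog.vanishesAt_iff (hf : IsBihomog k i j f) (P : Pt k) :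
    VanishesAt k f P ↔ eval (Sum.elim P.1.rep P.2.rep) f = 0 := by
  refine ⟨fun h => h _ _ P.1.rep_nonzero P.2.rep_nonzero P.1.mk_rep P.2.mk_rep,
    fun h u v hu hv h1 h2 => ?_⟩
  obtain ⟨a, rfl⟩ := (mk_eq_mk_iff' k _ _ hu P.1.rep_nonzero).1 (h1.trans P.1.mk_rep.symm)
  obtain ⟨b, rfl⟩ := (mk_eq_mk_iff' k _ _ hv P.2.rep_nonzero).1 (h2.trans P.2.mk_rep.symm)
  rw [hf.eval_smul, h, mul_zero]

end BiPoly

section Separator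

open Projectivization

variable {k : Type} [Field k] {S : Finset (Pt k)} {P : Pt k} {i j i' j' : ℕ} {f g : BiPoly k}

theorem IsBihomog.mul (hf : IsBihomog k i j f) (hg : IsBihomog k i' j' g) :
    IsBihomog k (i + i') (j + j') (f * g) := by
  rw [isBihomog_iff] at *
  exact ⟨hf.1.mul hg.1, hf.2.mul hg.2⟩

theorem isBihomog_X_pow_mul_X_pow (s t : Fin 2) (a b : ℕ) :
    IsBihomog k a b (X (Sum.inl s) ^ a * X (Sum.inr t) ^ b) := by
  rw [isBihomog_iff]
  constructor <;>
  · convert ((isWeightedHomogeneous_X k _ (Sum.inl s)).pow a).mul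
      ((isWeightedHomogeneous_X k _ (Sum.inr t)).pow b) using 1
    simp

theorem VanishesAt.mul_right (hf : VanishesAt k f P) (g : BiPoly k) : VanishesAt k (f * g) P :=
  fun u v hu hv h1 h2 => by rw [map_mul, hf u v hu hv h1 h2, zero_mul]

theorem IsSeparator.exists_of_le (hf : IsSeparator k S P i j f) (hi : i ≤ i') (hj : j ≤ j') :
    ∃ g, IsSeparator k S P i' j' g := by
  obtain ⟨hbi, hP, hvan⟩ := hf
  obtain ⟨s, hs⟩ : ∃ s, P.1.rep s ≠ 0 := Function.ne_iff.1 P.1.rep_nonzero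
  obtain ⟨t, ht⟩ : ∃ t, P.2.rep t ≠ 0 := Function.ne_iff.1 P.2.rep_nonzero
  have hbi' := hbi.mul (isBihomog_X_pow_mul_X_pow (k := k) s t (i' - i) (j' - j))
  rw [Nat.add_sub_cancel' hi, Nat.add_sub_cancel' hj] at hbi'
  refine ⟨_, hbi', fun h => hP ?_, fun P' hP' => (hvan P' hP').mul_right _⟩
  rw [hbi.vanishesAt_iff]
  rw [hbi'.vanishesAt_iff] at h
  simpa [hs, ht] using h

theorem IsBihomog.exists_polynomial_eval_row (hf : IsBihomog k i j f) (u v e : Fin 2 → k) :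
    ∃ G : Polynomial k, G.natDegree ≤ j ∧ G.coeff j = eval (Sum.elim u v) f ∧
      ∀ c, G.eval c = eval (Sum.elim u (c • v + e)) f := by
  set ps : Fin 2 ⊕ Fin 2 → Polynomial k := Sum.elim (fun t => Polynomial.C (u t))
    (fun t => Polynomial.C (v t) * Polynomial.X + Polynomial.C (e t))
  have hps : ∀ x, (ps x).natDegree ≤ (Sum.elim 0 1 : Fin 2 ⊕ Fin 2 → ℕ) x := by
    rintro (t | t)
    · simp [ps]
    · exact Polynomial.natDegree_linear_le
  have hw := (isBihomog_iff.1 hf).2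
  refine ⟨aeval ps f, hw.natDegree_aeval_le hps, ?_, fun c => ?_⟩
  · rw [hw.coeff_aeval hps]
    congr 2
    funext x
    rcases x with t | t <;> simp [ps, Polynomial.coeff_C]
  · rw [polynomial_eval_aeval]
    congr 2
    funext x
    rcases x with t | t <;> simp [ps, smul_eq_mul, mul_comm c]

theorem IsSeparator.card_filter_fst_eq_le (hf : IsSeparator k S P i j f) :
    ((S.erase P).filter (fun P' => P'.1 = P.1)).card ≤ j := by
  obtain ⟨hbi, hP, hvan⟩ := hf
  obtain ⟨e, hve⟩ :=
    exists_linearIndependent_pair_of_one_lt_finrank (R := k) (by simp) P.2.rep_nonzero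
  obtain ⟨G, hGdeg, hGcoeff, hGeval⟩ := hbi.exists_polynomial_eval_row P.1.rep P.2.rep e
  have hG : G ≠ 0 := by
    rintro rfl
    exact hP ((hbi.vanishesAt_iff P).2 (hGcoeff.symm.trans (Polynomial.coeff_zero j)))
  have hinj : Set.InjOn Prod.snd ((S.erase P).filter (fun P' => P'.1 = P.1) : Set (Pt k)) :=
    fun a ha b hb hab =>
      Prod.ext ((Finset.mem_filter.1 ha).2.trans (Finset.mem_filter.1 hb).2.symm) hab
  rw [← Finset.card_image_of_injOn hinj]
  refine (card_le_natDegree_of_lineChart_isRoot hve (by simp) P.2.rep_nonzero hG ?_ ?_).trans hGdeg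
  · rw [P.2.mk_rep, Finset.mem_image]
    rintro ⟨P', hP', h2⟩
    obtain ⟨hne, -⟩ := Finset.mem_erase.1 (Finset.mem_filter.1 hP').1
    exact hne (Prod.ext (Finset.mem_filter.1 hP').2 h2)
  · intro c hc
    obtain ⟨P', hP', hc'⟩ := Finset.mem_image.1 hc
    obtain ⟨hP'S, h1⟩ := Finset.mem_filter.1 hP'
    rw [Polynomial.IsRoot, hGeval]
    exact hvan P' hP'S _ _ P.1.rep_nonzero (smul_add_ne_zero hve c) (P.1.mk_rep.trans h1.symm)
      hc'.symm

theorem IsBihomog.rename_swap (hf : IsBihomog k i j f) : IsBihomog k j i (rename Sum.swap f) := by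
  intro d hd
  rw [support_rename_of_injective Sum.swap_leftInverse.injective, Finset.mem_image] at hd
  obtain ⟨d, hd, rfl⟩ := hd
  have hd' (x : Fin 2 ⊕ Fin 2) : d.mapDomain Sum.swap x = d x.swap := by
    conv_lhs => rw [← Sum.swap_swap x]
    exact Finsupp.mapDomain_apply Sum.swap_leftInverse.injective _ _
  simp only [hd', Sum.swap_inl, Sum.swap_inr]
  exact (hf d hd).symm

theorem vanishesAt_rename_swap_iff :
    VanishesAt k (rename Sum.swap f) P.swap ↔ VanishesAt k f P := by
  simp only [VanishesAt, eval_rename, Sum.elim_swap, Prod.fst_swap, Prod.snd_swap]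
  exact ⟨fun h u v hu hv h1 h2 => h v u hv hu h2 h1, fun h u v hu hv h1 h2 => h v u hv hu h2 h1⟩

theorem IsSeparator.swap (hf : IsSeparator k S P i j f) :
    IsSeparator k (S.image Prod.swap) P.swap j i (rename Sum.swap f) := by
  obtain ⟨hbi, hP, hvan⟩ := hf
  refine ⟨hbi.rename_swap, by rwa [vanishesAt_rename_swap_iff], fun P' hP' => ?_⟩
  obtain ⟨hne, hP'⟩ := Finset.mem_erase.1 hP'
  obtain ⟨Q, hQ, rfl⟩ := Finset.mem_image.1 hP'
  exact vanishesAt_rename_swap_iff.2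
    (hvan Q (Finset.mem_erase.2 ⟨by rintro rfl; exact hne rfl, hQ⟩))

theorem IsSeparator.card_filter_snd_eq_le (hf : IsSeparator k S P i j f) :
    ((S.erase P).filter (fun P' => P'.2 = P.2)).card ≤ i := by
  have hswap : ((S.image Prod.swap).erase P.swap).filter (fun P' => P'.1 = P.swap.1) =
      ((S.erase P).filter (fun P' => P'.2 = P.2)).image Prod.swap := by
    ext Q
    simp only [Finset.mem_filter, Finset.mem_erase, Finset.mem_image, Prod.fst_swap]
    constructor
    · rintro ⟨⟨hne, Q, hQ, rfl⟩, h⟩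
      exact ⟨Q, ⟨⟨by rintro rfl; exact hne rfl, hQ⟩, h⟩, rfl⟩
    · rintro ⟨Q, ⟨⟨hne, hQ⟩, h⟩, rfl⟩
      exact ⟨⟨fun h' => hne (Prod.swap_injective h'), Q, hQ, rfl⟩, h⟩
  rw [← Finset.card_image_of_injective _ Prod.swap_injective, ← hswap]
  exact hf.swap.card_filter_fst_eq_le

end Separator

section HilbertFunction

variable {k : Type} [Field k] {S : Finset (Pt k)} {P : Pt k} {i j : ℕ}

theorem idealPiece_eq_inf_ker (hP : P ∈ S) :
    idealPiece k S i j = idealPiece k (S.erase P) i j ⊓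
      LinearMap.ker (aeval (Sum.elim P.1.rep P.2.rep)).toLinearMap := by
  ext f
  refine ⟨fun ⟨hbi, hvan⟩ => ⟨⟨hbi, fun Q hQ => hvan Q (Finset.mem_of_mem_erase hQ)⟩,
    (hbi.vanishesAt_iff P).1 (hvan P hP)⟩, fun ⟨⟨hbi, hvan⟩, hf⟩ => ⟨hbi, fun Q hQ => ?_⟩⟩
  rcases eq_or_ne Q P with rfl | hQP
  · exact (hbi.vanishesAt_iff Q).2 hf
  · exact hvan Q (Finset.mem_erase.2 ⟨hQP, hQ⟩)

theorem idealPiece_erase_eq_of_not_exists_isSeparator (h : ¬ ∃ f, IsSeparator k S P i j f) :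
    idealPiece k (S.erase P) i j = idealPiece k S i j := by
  ext f
  refine ⟨fun ⟨hbi, hvan⟩ => ⟨hbi, fun Q hQ => ?_⟩,
    fun ⟨hbi, hvan⟩ => ⟨hbi, fun Q hQ => hvan Q (Finset.mem_of_mem_erase hQ)⟩⟩
  rcases eq_or_ne Q P with rfl | hQP
  · exact not_not.1 fun hfQ => h ⟨f, hbi, hfQ, hvan⟩
  · exact hvan Q (Finset.mem_erase.2 ⟨hQP, hQ⟩)

theorem IsSeparator.mem_idealPiece_erase {f : BiPoly k} (hf : IsSeparator k S P i j f) :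
    f ∈ idealPiece k (S.erase P) i j :=
  ⟨hf.1, hf.2.2⟩

theorem finrank_idealPiece_erase (hP : P ∈ S) :
    Module.finrank k (idealPiece k (S.erase P) i j) =
      Module.finrank k (idealPiece k S i j) + if ∃ f, IsSeparator k S P i j f then 1 else 0 := by
  split_ifs with h
  · obtain ⟨f, hf⟩ := h
    rw [idealPiece_eq_inf_ker hP]
    refine (Submodule.finrank_inf_ker_add_one hf.mem_idealPiece_erase ?_).symm
    simpa [hf.1.vanishesAt_iff] using hf.2.1
  · rw [idealPiece_erase_eq_of_not_exists_isSeparator h, add_zero]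

theorem exists_isSeparator_iff {f : BiPoly k}
    (hf : IsSeparator k S P ((S.erase P).filter (fun P' => P'.2 = P.2)).card
      ((S.erase P).filter (fun P' => P'.1 = P.1)).card f) :
    (∃ g, IsSeparator k S P i j g) ↔
      ((S.erase P).filter (fun P' => P'.2 = P.2)).card ≤ i ∧
        ((S.erase P).filter (fun P' => P'.1 = P.1)).card ≤ j :=
  ⟨fun ⟨_, hg⟩ => ⟨hg.card_filter_snd_eq_le, hg.card_filter_fst_eq_le⟩,
    fun h => hf.exists_of_le h.1 h.2⟩

theorem hilbMat_erase (hP : P ∈ S) {q p : ℕ}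
    (hsep : ∀ i j, (∃ f, IsSeparator k S P i j f) ↔ q ≤ i ∧ p ≤ j) (i j : ℤ) :
    hilbMat k (S.erase P) i j = hilbMat k S i j - if (q : ℤ) ≤ i ∧ (p : ℤ) ≤ j then 1 else 0 := by
  unfold hilbMat
  by_cases h0 : 0 ≤ i ∧ 0 ≤ j
  · have hcond : (q ≤ i.toNat ∧ p ≤ j.toNat) ↔ ((q : ℤ) ≤ i ∧ (p : ℤ) ≤ j) := by omega
    rw [if_pos h0, if_pos h0, finrank_idealPiece_erase hP,
      if_congr ((hsep _ _).trans hcond) rfl rfl]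
    split_ifs <;> push_cast <;> ring
  · rw [if_neg h0, if_neg h0, if_neg (by omega), sub_zero]

theorem diffMat_sub_indicator (M : ℤ → ℤ → ℤ) (q p i j : ℤ) :
    diffMat (fun i j => M i j - if q ≤ i ∧ p ≤ j then 1 else 0) i j =
      diffMat M i j - if (i, j) = (q, p) then 1 else 0 := by
  unfold diffMat
  split_ifs <;> simp_all <;> omega

end HilbertFunction

theorem thm_3_1_general (k : Type) [Field k]
    (X : Finset (Pt k)) (P : Pt k) (hP : P ∈ X)
    (p q : ℕ)
    (hp : p = ((X.erase P).filter (fun P' => P'.1 = P.1)).card)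
    (hq : q = ((X.erase P).filter (fun P' => P'.2 = P.2)).card)
    (hsep : ∃ f : BiPoly k, IsSeparator k X P q p f) :
    (∀ i j : ℤ, (i, j) ≠ ((q : ℤ), (p : ℤ)) →
      diffMat (hilbMat k (X.erase P)) i j = diffMat (hilbMat k X) i j) ∧
    diffMat (hilbMat k (X.erase P)) q p = diffMat (hilbMat k X) q p - 1 := by
  obtain ⟨f, hf⟩ := hsep
  have hiff : ∀ i j, (∃ g, IsSeparator k X P i j g) ↔ q ≤ i ∧ p ≤ j := by
    subst hp hq
    exact fun _ _ => exists_isSeparator_iff hf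
  have hM : hilbMat k (X.erase P) =
      fun i j => hilbMat k X i j - if (q : ℤ) ≤ i ∧ (p : ℤ) ≤ j then 1 else 0 :=
    funext₂ (hilbMat_erase hP hiff)
  rw [hM]
  exact ⟨fun i j hij => by rw [diffMat_sub_indicator, if_neg hij, sub_zero],
    by rw [diffMat_sub_indicator, if_pos rfl]⟩

/-- Theorem 3.1: let `X ⊆ ℙ¹ × ℙ¹` be a zero-dimensional scheme whose first
difference Hilbert function is supported in `[0,a] × [0,b]`, `P = R_h ∩ C_k`
a point of `X` of multiplicity `1`, `Z = X \ {P}`, `p = #(Z ∩ R_h)`,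
`q = #(Z ∩ C_k)`.  If there is a separator for `P` of bidegree `(q,p)`, then
`ΔM_Z = ΔM_X` away from `(q,p)` and `ΔM_Z(q,p) = ΔM_X(q,p) - 1`. -/
theorem thm_3_1 (k : Type) [Field k] [IsAlgClosed k]
    (X : Finset (Pt k)) (P : Pt k) (hP : P ∈ X)
    (a b : ℤ)
    (hsize : ∀ i j : ℤ, a < i ∨ b < j → diffMat (hilbMat k X) i j = 0)
    (p q : ℕ)
    (hp : p = ((X.erase P).filter (fun P' => P'.1 = P.1)).card)
    (hq : q = ((X.erase P).filter (fun P' => P'.2 = P.2)).card)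
    (hsep : ∃ f : BiPoly k, IsSeparator k X P q p f) :
    (∀ i j : ℤ, (i, j) ≠ ((q : ℤ), (p : ℤ)) →
      diffMat (hilbMat k (X.erase P)) i j = diffMat (hilbMat k X) i j) ∧
    diffMat (hilbMat k (X.erase P)) q p = diffMat (hilbMat k X) q p - 1 :=
  thm_3_1_general k X P hP p q hp hq hsep

end
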